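/- arXiv:2003.05073 — 5 statements merged into one kernel-verified Lean document; each statement's English description precedes it below -/
import Mathlib

section
/- For n ≥ 3, Σ_{λ ∈ D_{n-2}} q^{|λ|}·[ℓ(λ)]_q = q·[n-2]_q · ∏_{i=2}^{n-2} (1 + q^i), as polynomials in q. -/
/-- A restricted growth function of length `n`: `w 0 = 1` and each later entry is
at most one more than the maximum of the preceding entries. -/
def IsRGF {n : ℕ} (w : Fin n → ℕ) : Prop :=
  (∀ i : Fin n, (i : ℕ) = 0 → w i = 1) ∧
  (∀ i : Fin n, 0 < (i : ℕ) →
    w i ≤ 1 + (Finset.univ.filter (fun j : Fin n => j < i)).sup w)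

/-- Number of copies of the pattern 112 in `w`. -/
def copies112 {n : ℕ} (w : Fin n → ℕ) : ℕ :=
  ((Finset.univ : Finset (Fin n × Fin n × Fin n)).filter
    (fun t => t.1 < t.2.1 ∧ t.2.1 < t.2.2 ∧ w t.1 = w t.2.1 ∧ w t.2.1 < w t.2.2)).card

/-- Number of copies of the pattern 122 in `w`. -/
def copies122 {n : ℕ} (w : Fin n → ℕ) : ℕ :=
  ((Finset.univ : Finset (Fin n × Fin n × Fin n)).filter
    (fun t => t.1 < t.2.1 ∧ t.2.1 < t.2.2 ∧ w t.1 < w t.2.1 ∧ w t.2.1 = w t.2.2)).card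

/-- `ls` statistic: for each position, the number of distinct values to its left
that are smaller, summed over all positions. -/
def lsStat {n : ℕ} (w : Fin n → ℕ) : ℕ :=
  ∑ i : Fin n, ((Finset.univ.filter (fun j : Fin n => j < i ∧ w j < w i)).image w).card

/-- `rb` statistic: distinct values to the right that are bigger, summed. -/
def rbStat {n : ℕ} (w : Fin n → ℕ) : ℕ :=
  ∑ i : Fin n, ((Finset.univ.filter (fun j : Fin n => i < j ∧ w i < w j)).image w).card

/-- `lb` statistic: distinct values to the left that are bigger, summed. -/
def lbStat {n : ℕ} (w : Fin n → ℕ) : ℕ :=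
  ∑ i : Fin n, ((Finset.univ.filter (fun j : Fin n => j < i ∧ w i < w j)).image w).card

section
open Polynomial Finset

lemma aux2 (m : ℕ) :
    (∑ S ∈ (Finset.Icc 1 m).powerset, (X : Polynomial ℕ) ^ (S.sum id + S.card)) =
      ∏ i ∈ Finset.Icc 1 m, ((X : Polynomial ℕ) ^ (i + 1) + 1) := by
  rw [Finset.prod_add]
  refine Finset.sum_congr rfl fun S hS => ?_
  rw [Finset.prod_const_one, mul_one, Finset.prod_pow_eq_pow_sum, Finset.sum_add_distrib,
    Finset.sum_const, smul_eq_mul, mul_one]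
  rfl

lemma aux (m : ℕ) :
    (∑ S ∈ (Finset.Icc 1 m).powerset,
        (X : Polynomial ℕ) ^ (S.sum id) * ∑ j ∈ Finset.range S.card, X ^ j) =
      X * (∑ j ∈ Finset.range m, (X : Polynomial ℕ) ^ j) *
        ∏ i ∈ Finset.Icc 2 m, (1 + (X : Polynomial ℕ) ^ i) := by
  induction m with
  | zero => simp
  | succ m ih =>
    have hnotmem : m + 1 ∉ Finset.Icc 1 m := by simp
    have hins : Finset.Icc 1 (m + 1) = insert (m + 1) (Finset.Icc 1 m) := by
      ext x; simp; omega
    rw [hins, Finset.sum_powerset_insert hnotmem]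
    have step : ∑ S ∈ (Finset.Icc 1 m).powerset,
        (X : Polynomial ℕ) ^ ((insert (m+1) S).sum id) *
          ∑ j ∈ Finset.range (insert (m+1) S).card, X ^ j
        = X ^ (m+1) * (∑ S ∈ (Finset.Icc 1 m).powerset,
            (X : Polynomial ℕ) ^ (S.sum id) * ∑ j ∈ Finset.range S.card, X ^ j)
          + X ^ (m+1) * ∑ S ∈ (Finset.Icc 1 m).powerset,
              (X : Polynomial ℕ) ^ (S.sum id + S.card) := by
      rw [Finset.mul_sum, Finset.mul_sum, ← Finset.sum_add_distrib]
      refine Finset.sum_congr rfl fun S hS => ?_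
      have hS' : m + 1 ∉ S := fun h => hnotmem (Finset.mem_powerset.mp hS h)
      rw [Finset.sum_insert hS', Finset.card_insert_of_notMem hS',
        Finset.sum_range_succ]
      simp only [id]
      ring
    rw [step, ih, aux2]
    have hprodre : ∏ i ∈ Finset.Icc 1 m, ((X : Polynomial ℕ) ^ (i + 1) + 1)
        = ∏ i ∈ Finset.Icc 2 (m + 1), (1 + (X : Polynomial ℕ) ^ i) := by
      rw [show Finset.Icc 2 (m+1) = (Finset.Icc 1 m).map (addRightEmbedding 1) by
        rw [Finset.map_add_right_Icc], Finset.prod_map]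
      exact Finset.prod_congr rfl fun i _ => add_comm _ _
    rw [hprodre, Finset.sum_range_succ]
    rcases Nat.eq_zero_or_pos m with hm | hm
    · subst hm; simp
    · rw [Finset.prod_Icc_succ_top (by omega :  2 ≤ m + 1)]
      ring

end

/-- For `n ≥ 3`, `Σ_{λ ∈ D_{n-2}} q^{|λ|}·[ℓ(λ)]_q = q·[n-2]_q·∏_{i=2}^{n-2}(1+q^i)`. -/
theorem stmt_9 (n : ℕ) (hn : 3 ≤ n) :
    (∑ S ∈ (Finset.Icc 1 (n - 2)).powerset,
        (Polynomial.X : Polynomial ℕ) ^ (S.sum id) *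
          ∑ j ∈ Finset.range S.card, Polynomial.X ^ j) =
      Polynomial.X * (∑ j ∈ Finset.range (n - 2), (Polynomial.X : Polynomial ℕ) ^ j) *
        ∏ i ∈ Finset.Icc 2 (n - 2), (1 + (Polynomial.X : Polynomial ℕ) ^ i) := by
  exact aux (n - 2)
end

section
/- The total number of parts over all integer partitions λ satisfying ℓ(λ) + λ_1 + 1 ≤ n (i.e., fitting in an s×t box with s + t ≤ n − 1) equals (n-2)·2^(n-3) for n ≥ 3. -/
/-!
Sort the pairs `(λ, i)` by `ℓ = ℓ(λ)`. A partition with exactly `ℓ` parts and `ℓ + λ₁ ≤ n - 1` is a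
multiset of size `ℓ` drawn from `{1, …, n - 1 - ℓ}`; there are
`multichoose (n - 1 - ℓ) ℓ = choose (n - 2) ℓ` of them, each carrying `ℓ` marks `i`. Hence the total
is `∑ ℓ * choose (n - 2) ℓ = (n - 2) * 2 ^ (n - 3)`.
-/

open Finset

theorem Finset.card_sym {α : Type*} [DecidableEq α] (s : Finset α) (k : ℕ) :
    #(s.sym k) = s.card.multichoose k := by
  conv_lhs => rw [← s.attach_map_val]
  rw [sym_map, card_map, ← univ_eq_attach, sym_univ, card_univ, Sym.card_sym_eq_multichoose,
    Fintype.card_coe]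

def partitionsInBox (ℓ b : ℕ) : Finset (Multiset ℕ) :=
  ((Icc 1 b).sym ℓ).image Sym.toMultiset

lemma mem_partitionsInBox {ℓ b : ℕ} {s : Multiset ℕ} :
    s ∈ partitionsInBox ℓ b ↔ Multiset.card s = ℓ ∧ ∀ x ∈ s, 1 ≤ x ∧ x ≤ b := by
  simp only [partitionsInBox, mem_image, mem_sym_iff, mem_Icc]
  constructor
  · rintro ⟨m, hm, rfl⟩
    exact ⟨m.2, hm⟩
  · rintro ⟨hs, hx⟩
    exact ⟨⟨s, hs⟩, hx, rfl⟩

lemma card_partitionsInBox (ℓ b : ℕ) : #(partitionsInBox ℓ b) = b.multichoose ℓ := by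
  rw [partitionsInBox, card_image_of_injective _ Sym.coe_injective, card_sym, Nat.card_Icc,
    Nat.add_sub_cancel]

lemma disjoint_partitionsInBox {ℓ ℓ' : ℕ} (b b' : ℕ) (h : ℓ ≠ ℓ') :
    Disjoint (partitionsInBox ℓ b) (partitionsInBox ℓ' b') :=
  disjoint_left.2 fun _ hs hs' ↦ h <| (mem_partitionsInBox.1 hs).1.symm.trans
    (mem_partitionsInBox.1 hs').1

def markedPartitions (n : ℕ) : Finset (Multiset ℕ × ℕ) :=
  (range (n - 2 + 1)).biUnion fun ℓ ↦ partitionsInBox ℓ (n - 1 - ℓ) ×ˢ Icc 1 ℓ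

lemma coe_markedPartitions (n : ℕ) :
    ↑(markedPartitions n) = {p : Multiset ℕ × ℕ | (∀ x ∈ p.1, 0 < x) ∧
      Multiset.card p.1 + p.1.sup + 1 ≤ n ∧ 1 ≤ p.2 ∧ p.2 ≤ Multiset.card p.1} := by
  ext ⟨s, i⟩
  simp only [markedPartitions, coe_biUnion, mem_coe, mem_range, mem_product, mem_Icc,
    mem_partitionsInBox, Set.mem_iUnion, Set.mem_ofPred_eq, exists_prop]
  constructor
  · rintro ⟨ℓ, hℓ, ⟨rfl, hs⟩, hi⟩
    have hsup : s.sup ≤ n - 1 - Multiset.card s := Multiset.sup_le.2 fun x hx ↦ (hs x hx).2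
    exact ⟨fun x hx ↦ (hs x hx).1, by omega, hi⟩
  · rintro ⟨hs, hbox, hi⟩
    have hsup : 1 ≤ s.sup := by
      obtain ⟨x, hx⟩ := Multiset.card_pos_iff_exists_mem.1 (show 0 < Multiset.card s by omega)
      exact (hs x hx).trans_le (Multiset.le_sup hx)
    refine ⟨_, by omega, ⟨rfl, fun x hx ↦ ⟨hs x hx, ?_⟩⟩, hi⟩
    have := Multiset.le_sup hx
    omega

lemma card_markedPartitions (n : ℕ) :
    #(markedPartitions n) = ∑ ℓ ∈ range (n - 2 + 1), ℓ * (n - 2).choose ℓ := by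
  rw [markedPartitions, card_biUnion fun ℓ _ ℓ' _ h ↦
    disjoint_product.2 (.inl (disjoint_partitionsInBox _ _ h))]
  refine sum_congr rfl fun ℓ hℓ ↦ ?_
  rw [card_product, card_partitionsInBox, Nat.card_Icc, Nat.multichoose_eq, mul_comm]
  have := mem_range.1 hℓ
  congr 2
  omega

theorem stmt_12_general (n : ℕ) :
    {p : Multiset ℕ × ℕ | (∀ x ∈ p.1, 0 < x) ∧ Multiset.card p.1 + p.1.sup + 1 ≤ n ∧
        1 ≤ p.2 ∧ p.2 ≤ Multiset.card p.1}.ncard = (n - 2) * 2 ^ (n - 3) := by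
  rw [← coe_markedPartitions, Set.ncard_coe_finset, card_markedPartitions,
    Nat.sum_range_mul_choose, Nat.sub_sub]

/-- The total number of parts over all partitions `λ` (encoded as multisets of
positive integers) with `ℓ(λ) + λ₁ + 1 ≤ n` equals `(n-2)·2^(n-3)` for `n ≥ 3`.
The count of parts is realized as the number of pairs `(λ, i)` with `1 ≤ i ≤ ℓ(λ)`. -/
theorem stmt_12 (n : ℕ) (hn : 3 ≤ n) :
    {p : Multiset ℕ × ℕ | (∀ x ∈ p.1, 0 < x) ∧ Multiset.card p.1 + p.1.sup + 1 ≤ n ∧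
        1 ≤ p.2 ∧ p.2 ≤ Multiset.card p.1}.ncard = (n - 2) * 2 ^ (n - 3) :=
  stmt_12_general n
end

section
/- The total number of parts over all partitions fitting in a t×s box with t + s ≤ n − 1 equals the total number of parts over all partitions with distinct parts at most n − 2. -/
/-!
A partition with `k` parts fitting in a `k × (n - 1 - k)` box is a `k`-multiset of
`{1, …, n - 1 - k}`, so by stars and bars there are `(n - 2).choose k` of them, just as many as
`k`-subsets of `{1, …, n - 2}`. Counting each with multiplicity `k` (a pair `(μ, i)` with
`1 ≤ i ≤ ℓ(μ)` marks one part of `μ`) gives the same sum on both sides.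
-/

open Finset

namespace Finset

variable {α : Type*} [DecidableEq α]

theorem card_sym_s13 (s : Finset α) (k : ℕ) : #(s.sym k) = (#s + k - 1).choose k := by
  conv_lhs => rw [← s.attach_map_val]
  rw [sym_map, card_map, attach_eq_univ, sym_univ, card_univ, Sym.card_sym_eq_choose,
    Fintype.card_coe]

def symMultiset (s : Finset α) (k : ℕ) : Finset (Multiset α) :=
  (s.sym k).map ⟨Sym.toMultiset, Sym.coe_injective⟩

theorem mem_symMultiset {s : Finset α} {k : ℕ} {μ : Multiset α} :
    μ ∈ s.symMultiset k ↔ Multiset.card μ = k ∧ ∀ x ∈ μ, x ∈ s := by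
  simp only [symMultiset, mem_map, mem_sym_iff, Function.Embedding.coeFn_mk]
  constructor
  · rintro ⟨σ, hσ, rfl⟩
    exact ⟨σ.2, hσ⟩
  · rintro ⟨hk, hs⟩
    exact ⟨⟨μ, hk⟩, hs, rfl⟩

theorem card_symMultiset (s : Finset α) (k : ℕ) :
    #(s.symMultiset k) = (#s + k - 1).choose k := by
  rw [symMultiset, card_map, card_sym_s13]

theorem disjoint_symMultiset_of_ne (s t : Finset α) {k l : ℕ} (hkl : k ≠ l) :
    Disjoint (s.symMultiset k) (t.symMultiset l) := by
  refine disjoint_left.mpr fun μ hk hl => hkl ?_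
  rw [← (mem_symMultiset.mp hk).1, (mem_symMultiset.mp hl).1]

theorem sum_card_powerset {β : Type*} (s : Finset β) :
    ∑ t ∈ s.powerset, #t = ∑ k ∈ range (#s + 1), (#s).choose k * k :=
  sum_powerset_apply_card id

end Finset

def markedBoxPartitions (n : ℕ) : Finset (Multiset ℕ × ℕ) :=
  (range (n - 2 + 1)).biUnion fun k => (Icc 1 (n - 1 - k)).symMultiset k ×ˢ Icc 1 k

theorem card_markedBoxPartitions (n : ℕ) :
    #(markedBoxPartitions n) = ∑ k ∈ range (n - 2 + 1), (n - 2).choose k * k := by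
  rw [markedBoxPartitions, card_biUnion]
  · refine sum_congr rfl fun k hk => ?_
    rw [card_product, card_symMultiset, Nat.card_Icc, Nat.card_Icc, Nat.add_sub_cancel]
    rw [mem_range] at hk
    congr 2
    omega
  · intro k _ l _ hkl
    exact disjoint_product.mpr (Or.inl (disjoint_symMultiset_of_ne _ _ hkl))

theorem coe_markedBoxPartitions (n : ℕ) :
    ↑(markedBoxPartitions n) = {p : Multiset ℕ × ℕ | (∀ x ∈ p.1, 0 < x) ∧
      Multiset.card p.1 + p.1.sup + 1 ≤ n ∧ 1 ≤ p.2 ∧ p.2 ≤ Multiset.card p.1} := by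
  ext ⟨μ, i⟩
  simp only [markedBoxPartitions, Set.mem_ofPred_eq, coe_biUnion, coe_range, Set.mem_Iio,
    coe_product, Set.mem_iUnion, Set.mem_prod, mem_coe, mem_symMultiset, mem_Icc, exists_prop]
  constructor
  · rintro ⟨k, hk, ⟨rfl, hμ⟩, hi1, hik⟩
    have hsup : μ.sup ≤ n - 1 - Multiset.card μ := Multiset.sup_le.mpr fun x hx => (hμ x hx).2
    exact ⟨fun x hx => (hμ x hx).1, by omega, hi1, hik⟩
  · rintro ⟨hpos, hbound, hi1, hik⟩
    -- a marked partition has a part `x ≥ 1`, which forces `ℓ(μ) ≤ n - 2`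
    obtain ⟨x, hx⟩ := Multiset.card_pos_iff_exists_mem.mp (show 0 < Multiset.card μ by omega)
    have hxsup := Multiset.le_sup hx
    refine ⟨_, by have := hpos x hx; omega, ⟨rfl, fun y hy => ?_⟩, hi1, hik⟩
    have := Multiset.le_sup hy
    have := hpos y hy
    omega

/-- The total number of parts over all partitions fitting in a `t×s` box with
`t + s ≤ n - 1` equals the total number of parts over all partitions with
distinct parts at most `n - 2`. -/
theorem stmt_13 (n : ℕ) :
    {p : Multiset ℕ × ℕ | (∀ x ∈ p.1, 0 < x) ∧ Multiset.card p.1 + p.1.sup + 1 ≤ n ∧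
        1 ≤ p.2 ∧ p.2 ≤ Multiset.card p.1}.ncard =
      ∑ S ∈ (Finset.Icc 1 (n - 2)).powerset, S.card := by
  rw [← coe_markedBoxPartitions, Set.ncard_coe_finset, card_markedBoxPartitions,
    sum_card_powerset, Nat.card_Icc, Nat.add_sub_cancel]
end

section
/- The polynomial ∏_{i=1}^n (1 + q^i) is symmetric and unimodal. -/
/-!
The coefficient of `q^k` counts the subsets of `{1, …, n}` with sum `k`, so complementation
gives the symmetry. Unimodality follows Proctor's linear-algebra proof of Stanley's theorem. Let
`V_k` be the `ℚ`-span of the subsets with sum `k` and `N = n(n+1)/2` the degree. View a subset as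
particles on the sites `1, …, n`, fed by a reservoir at site `0`. A weighted sum `raise n` of the
moves `j ↦ j + 1` maps `V_k` to `V_{k+1}`, the plain sum `lower n` of the moves `j + 1 ↦ j` maps
back, and their commutator is `N - 2k` on `V_k`. As for `sl₂`-representations, `raise n` is then
injective on `V_k` while `2k < N`, so `dim V_k ≤ dim V_{k+1}` on the lower half.
-/

/-- A polynomial is symmetric if `a_i = a_{d-i}` for all `i ≤ d`, `d` the degree. -/
def SymmPolyN (p : Polynomial ℕ) : Prop :=
  ∀ i ≤ p.natDegree, p.coeff i = p.coeff (p.natDegree - i)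

/-- A polynomial is unimodal if its coefficients weakly increase up to some index `m`
and weakly decrease afterwards. -/
def UnimodalPolyN (p : Polynomial ℕ) : Prop :=
  ∃ m, (∀ i < m, p.coeff i ≤ p.coeff (i + 1)) ∧ (∀ i, m ≤ i → p.coeff (i + 1) ≤ p.coeff i)

open Finset Polynomial

lemma mul_mul_mul_comm_of_commute {R : Type*} [Monoid R] {a b c d : R} (h : Commute (b * c) d) :
    a * b * (c * d) = a * d * (b * c) := by
  rw [mul_assoc, ← mul_assoc b, h.eq, mul_assoc]

lemma sum_mul_sum_sub_sum_mul_sum {R ι : Type*} [Ring R] (s : Finset ι) (f g : ι → R)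
    (h : ∀ i ∈ s, ∀ j ∈ s, i ≠ j → Commute (f i) (g j)) :
    (∑ i ∈ s, f i) * (∑ j ∈ s, g j) - (∑ j ∈ s, g j) * (∑ i ∈ s, f i) =
      ∑ i ∈ s, (f i * g i - g i * f i) := by
  rw [sum_mul_sum, sum_mul_sum, sum_comm (s := s) (t := s) (f := fun j i => g j * f i),
    ← sum_sub_distrib]
  refine sum_congr rfl fun i hi => ?_
  rw [← sum_sub_distrib, sum_eq_single_of_mem i hi]
  exact fun j hj hji => sub_eq_zero.mpr (h i hi j hj hji.symm).eq

lemma two_mul_sum_Icc_one (n : ℕ) : 2 * ∑ i ∈ Icc 1 n, i = n * (n + 1) := by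
  induction n with
  | zero => rfl
  | succ n ih => rw [sum_Icc_succ_top (by omega), mul_add, ih]; ring

lemma sum_range_sub_mul_sub (C : ℚ) (y : ℕ → ℚ) (m : ℕ) :
    ∑ j ∈ range m, (C - j * (j + 1)) * (y j - y (j + 1)) =
      C * y 0 - (C - m * (m + 1)) * y m - 2 * ∑ j ∈ range m, (j + 1) * y (j + 1) := by
  induction m with
  | zero => simp
  | succ m ih => rw [sum_range_succ, ih, sum_range_succ]; push_cast; ring

def subsetsWithSum (s : Finset ℕ) (k : ℕ) : Finset (Finset ℕ) :=
  {t ∈ s.powerset | ∑ i ∈ t, i = k}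

lemma mem_subsetsWithSum {s t : Finset ℕ} {k : ℕ} :
    t ∈ subsetsWithSum s k ↔ t ⊆ s ∧ ∑ i ∈ t, i = k := by
  simp [subsetsWithSum]

lemma coeff_prod_one_add_X_pow (s : Finset ℕ) (k : ℕ) :
    (∏ i ∈ s, (1 + X ^ i : ℕ[X])).coeff k = #(subsetsWithSum s k) := by
  simp_rw [add_comm (1 : ℕ[X]), prod_add, prod_const_one, mul_one]
  rw [sum_congr rfl fun t _ => prod_pow_eq_pow_sum t (fun i => i) (X : ℕ[X])]
  simp_rw [finsetSum_coeff, coeff_X_pow, sum_boole, Nat.cast_id, subsetsWithSum, @eq_comm _ k]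

lemma one_add_X_pow_ne_zero (i : ℕ) : (1 + X ^ i : ℕ[X]) ≠ 0 := by
  intro h; simpa using congrArg (eval 1) h

lemma natDegree_prod_one_add_X_pow (s : Finset ℕ) :
    (∏ i ∈ s, (1 + X ^ i : ℕ[X])).natDegree = ∑ i ∈ s, i := by
  rw [natDegree_prod _ _ fun i _ => one_add_X_pow_ne_zero i]
  refine sum_congr rfl fun i _ => ?_
  rw [add_comm, ← C_1, natDegree_X_pow_add_C]

lemma card_subsetsWithSum_sub {s : Finset ℕ} {k : ℕ} (hk : k ≤ ∑ i ∈ s, i) :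
    #(subsetsWithSum s (∑ i ∈ s, i - k)) = #(subsetsWithSum s k) := by
  have hcompl {t : Finset ℕ} (ht : t ⊆ s) : ∑ i ∈ s \ t, i = ∑ i ∈ s, i - ∑ i ∈ t, i := by
    rw [← sum_sdiff ht, Nat.add_sub_cancel]
  refine card_nbij' (s \ ·) (s \ ·) ?_ ?_ ?_ ?_ <;> intro t ht <;>
    simp only [mem_coe, mem_subsetsWithSum] at ht ⊢
  · refine ⟨sdiff_subset, ?_⟩
    have := sum_le_sum_of_subset (f := fun i => i) ht.1
    rw [hcompl ht.1, ht.2]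
    omega
  · exact ⟨sdiff_subset, by rw [hcompl ht.1, ht.2]⟩
  · exact Finset.sdiff_sdiff_eq_self ht.1
  · exact Finset.sdiff_sdiff_eq_self ht.1

lemma symmPolyN_prod_one_add_X_pow (s : Finset ℕ) : SymmPolyN (∏ i ∈ s, (1 + X ^ i : ℕ[X])) := by
  intro k hk
  rw [natDegree_prod_one_add_X_pow] at *
  rw [coeff_prod_one_add_X_pow, coeff_prod_one_add_X_pow, card_subsetsWithSum_sub hk]

lemma unimodalPolyN_of_symmPolyN {p : ℕ[X]} (hsymm : SymmPolyN p)
    (hmono : ∀ i, 2 * i < p.natDegree → p.coeff i ≤ p.coeff (i + 1)) : UnimodalPolyN p := by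
  refine ⟨(p.natDegree + 1) / 2, fun i hi => hmono i (by omega), fun i hi => ?_⟩
  obtain hlt | hle := lt_or_ge p.natDegree (i + 1)
  · simp [coeff_eq_zero_of_natDegree_lt hlt]
  · have hmid : p.natDegree - i = p.natDegree - (i + 1) + 1 := by omega
    rw [hsymm (i + 1) hle, hsymm i (by omega), hmid]
    exact hmono _ (by omega)

section LoweringRaising

variable {K V : Type*} [Field K] [LinearOrder K] [IsStrictOrderedRing K] [AddCommGroup V]
  [Module K V] {W : ℕ → Submodule K V} {E F : Module.End K V} {h : ℕ → K}

lemma eq_zero_of_lower_raise_add_smul_eq_zero (hF : ∀ k, ∀ x ∈ W (k + 1), F x ∈ W k)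
    (hF₀ : ∀ x ∈ W 0, F x = 0) (hFE : ∀ k, ∀ x ∈ W k, F (E x) - E (F x) = h k • x) {k : ℕ}
    (hpos : ∀ j ≤ k, 0 < h j) {t : K} (ht : 0 ≤ t) {x : V} (hx : x ∈ W k)
    (hx₀ : F (E x) + t • x = 0) : x = 0 := by
  induction k generalizing t x with
  | zero =>
    have : (h 0 + t) • x = 0 := by
      rw [add_smul, ← hFE 0 x hx, hF₀ x hx, map_zero, sub_zero, hx₀]
    exact (smul_eq_zero.mp this).resolve_left (by linarith [hpos 0 le_rfl])
  | succ k ih =>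
    -- `E (F x) = -c • x`, so `F x ∈ W k` is killed by `F ∘ E + c`; by induction `F x = 0`.
    set c := h (k + 1) + t
    have hc : 0 < c := by linarith [hpos (k + 1) le_rfl]
    have hEF : E (F x) = -c • x := by
      rw [neg_smul, add_smul, ← hFE (k + 1) x hx]
      linear_combination (norm := module) hx₀
    have hFx : F x = 0 := by
      refine ih (fun j hj => hpos j (by omega)) hc.le (hF k x hx) ?_
      rw [hEF, map_smul, neg_smul, neg_add_cancel]
    have : c • x = 0 := by rw [← neg_eq_zero, ← neg_smul, ← hEF, hFx, map_zero]
    exact (smul_eq_zero.mp this).resolve_left hc.ne'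

lemma finrank_le_finrank_succ {k : ℕ} [FiniteDimensional K (W (k + 1))]
    (hE : ∀ x ∈ W k, E x ∈ W (k + 1)) (hF : ∀ k, ∀ x ∈ W (k + 1), F x ∈ W k)
    (hF₀ : ∀ x ∈ W 0, F x = 0) (hFE : ∀ k, ∀ x ∈ W k, F (E x) - E (F x) = h k • x)
    (hpos : ∀ j ≤ k, 0 < h j) : Module.finrank K (W k) ≤ Module.finrank K (W (k + 1)) := by
  refine LinearMap.finrank_le_finrank_of_injective (f := E.restrict hE) ?_
  rw [← LinearMap.ker_eq_bot, LinearMap.ker_eq_bot']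
  intro x hx
  have hEx : E x = 0 := congrArg Subtype.val hx
  exact Subtype.ext <| eq_zero_of_lower_raise_add_smul_eq_zero hF hF₀ hFE hpos le_rfl x.2
    (by rw [hEx, map_zero, zero_smul, add_zero])

end LoweringRaising

namespace Proctor

local notation "V" => Finset ℕ →₀ ℚ

noncomputable def insertOp (a : ℕ) : Module.End ℚ V :=
  Finsupp.lift V ℚ (Finset ℕ) fun S => if a ∈ S then 0 else Finsupp.single (insert a S) 1

noncomputable def eraseOp (a : ℕ) : Module.End ℚ V :=
  Finsupp.lift V ℚ (Finset ℕ) fun S => if a ∈ S then Finsupp.single (S.erase a) 1 else 0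

@[simp]
lemma insertOp_single (a : ℕ) (S : Finset ℕ) :
    insertOp a (Finsupp.single S 1) = if a ∈ S then 0 else Finsupp.single (insert a S) 1 := by
  simp [insertOp]

@[simp]
lemma eraseOp_single (a : ℕ) (S : Finset ℕ) :
    eraseOp a (Finsupp.single S 1) = if a ∈ S then Finsupp.single (S.erase a) 1 else 0 := by
  simp [eraseOp]

lemma ext_single {f g : Module.End ℚ V} (h : ∀ S, f (Finsupp.single S 1) = g (Finsupp.single S 1)) :
    f = g :=
  Finsupp.lhom_ext' fun S => LinearMap.ext_ring (h S)

lemma commute_insertOp_insertOp (a b : ℕ) : Commute (insertOp a) (insertOp b) := by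
  obtain rfl | hab := eq_or_ne a b
  · rfl
  refine ext_single fun S => ?_
  by_cases ha : a ∈ S <;> by_cases hb : b ∈ S <;>
    simp [ha, hb, hab, hab.symm, Finset.insert_comm a b]

lemma commute_eraseOp_eraseOp (a b : ℕ) : Commute (eraseOp a) (eraseOp b) := by
  obtain rfl | hab := eq_or_ne a b
  · rfl
  refine ext_single fun S => ?_
  by_cases ha : a ∈ S <;> by_cases hb : b ∈ S <;>
    simp [ha, hb, hab, hab.symm, Finset.erase_right_comm]

lemma commute_insertOp_eraseOp {a b : ℕ} (hab : a ≠ b) : Commute (insertOp a) (eraseOp b) := by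
  refine ext_single fun S => ?_
  by_cases ha : a ∈ S <;> by_cases hb : b ∈ S <;>
    simp [ha, hb, hab, hab.symm, Finset.erase_insert_of_ne hab]

noncomputable def numberOp (a : ℕ) : Module.End ℚ V := insertOp a * eraseOp a

lemma numberOp_single (a : ℕ) (S : Finset ℕ) :
    numberOp a (Finsupp.single S 1) = (if a ∈ S then 1 else 0 : ℚ) • Finsupp.single S 1 := by
  by_cases ha : a ∈ S <;> simp [numberOp, ha, Finset.insert_erase]

lemma eraseOp_mul_insertOp (a : ℕ) : eraseOp a * insertOp a = 1 - numberOp a := by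
  refine ext_single fun S => ?_
  by_cases ha : a ∈ S <;> simp [numberOp, ha, Finset.insert_erase]

lemma commute_numberOp (a b : ℕ) : Commute (numberOp a) (numberOp b) := by
  obtain rfl | hab := eq_or_ne a b
  · rfl
  exact ((commute_insertOp_insertOp a b).mul_right (commute_insertOp_eraseOp hab)).mul_left
    ((commute_insertOp_eraseOp hab.symm).symm.mul_right (commute_eraseOp_eraseOp a b))

/-- Site `0` acts as an inexhaustible reservoir: `up 0` inserts `1` and `down 0` erases it. -/
noncomputable def up (j : ℕ) : Module.End ℚ V :=
  insertOp (j + 1) * if j = 0 then 1 else eraseOp j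

noncomputable def down (j : ℕ) : Module.End ℚ V :=
  (if j = 0 then 1 else insertOp j) * eraseOp (j + 1)

lemma commute_down_up {j k : ℕ} (hkj : k ≠ j) : Commute (down k) (up j) := by
  have h₁ : Commute (if k = 0 then 1 else insertOp k) (insertOp (j + 1)) := by
    split_ifs
    exacts [Commute.one_left _, commute_insertOp_insertOp _ _]
  have h₂ : Commute (if k = 0 then 1 else insertOp k) (if j = 0 then 1 else eraseOp j) := by
    split_ifs
    exacts [Commute.one_left _, Commute.one_left _, Commute.one_right _,
      commute_insertOp_eraseOp hkj]
  have h₃ : Commute (eraseOp (k + 1)) (insertOp (j + 1)) :=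
    (commute_insertOp_eraseOp (by omega)).symm
  have h₄ : Commute (eraseOp (k + 1)) (if j = 0 then 1 else eraseOp j) := by
    split_ifs
    exacts [Commute.one_right _, commute_eraseOp_eraseOp _ _]
  exact (h₁.mul_right h₂).mul_left (h₃.mul_right h₄)

lemma down_mul_up_sub_up_mul_down (j : ℕ) :
    down j * up j - up j * down j =
      if j = 0 then 1 - (2 : ℚ) • numberOp 1 else numberOp j - numberOp (j + 1) := by
  obtain rfl | hj := eq_or_ne j 0
  · simp only [down, up, if_true, one_mul, mul_one, eraseOp_mul_insertOp, numberOp]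
    module
  simp only [down, up, if_neg hj]
  have hfirst := mul_mul_mul_comm_of_commute (a := insertOp j)
    ((commute_eraseOp_eraseOp (j + 1) j).mul_left (commute_insertOp_eraseOp j.succ_ne_self))
  have hsecond := mul_mul_mul_comm_of_commute (a := insertOp (j + 1))
    ((commute_eraseOp_eraseOp j (j + 1)).mul_left (commute_insertOp_eraseOp j.succ_ne_self.symm))
  rw [hfirst, hsecond, ← numberOp, ← numberOp, eraseOp_mul_insertOp, eraseOp_mul_insertOp,
    mul_sub, mul_sub, mul_one, mul_one, (commute_numberOp _ _).eq]
  abel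

/-- Chosen so that `lower n * raise n - raise n * lower n` acts on a subset `S` as `N - 2 ∑ S`.
The reservoir weight is halved because `down 0 * up 0 - up 0 * down 0 = 1 - 2 numberOp 1`
counts site `1` twice. -/
noncomputable def raiseCoeff (n j : ℕ) : ℚ :=
  if j = 0 then (∑ i ∈ Icc 1 n, i : ℕ) else n * (n + 1) - j * (j + 1)

lemma sum_raiseCoeff_mul (n : ℕ) (x : ℕ → ℚ) :
    ∑ j ∈ range n, raiseCoeff n j * (if j = 0 then 1 - 2 * x 1 else x j - x (j + 1)) =
      (∑ i ∈ Icc 1 n, i : ℕ) - 2 * ∑ a ∈ Icc 1 n, a * x a := by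
  have hN : ((∑ i ∈ Icc 1 n, i : ℕ) : ℚ) = n * (n + 1) / 2 := by
    rw [eq_div_iff two_ne_zero, mul_comm, ← Nat.cast_ofNat, ← Nat.cast_mul, two_mul_sum_Icc_one]
    push_cast; ring
  -- `y 0 = 1 / 2` turns the reservoir term into an ordinary telescoping term.
  set y : ℕ → ℚ := fun j => if j = 0 then 1 / 2 else x j
  have hterm : ∀ j, raiseCoeff n j * (if j = 0 then 1 - 2 * x 1 else x j - x (j + 1)) =
      (n * (n + 1) - j * (j + 1)) * (y j - y (j + 1)) := by
    intro j
    obtain rfl | hj := eq_or_ne j 0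
    · simp only [raiseCoeff, y, hN, if_pos, Nat.cast_zero, zero_add, one_ne_zero, if_false]
      ring
    · simp [raiseCoeff, y, hj]
  have hy : ∀ j, y (j + 1) = x (j + 1) := fun j => if_neg j.succ_ne_zero
  rw [sum_congr rfl fun j _ => hterm j, sum_range_sub_mul_sub, hN, ← Ico_add_one_right_eq_Icc,
    sum_Ico_eq_sum_range, Nat.add_sub_cancel]
  simp only [hy, add_comm 1, Nat.cast_add, Nat.cast_one, y, if_pos]
  ring

noncomputable def raise (n : ℕ) : Module.End ℚ V := ∑ j ∈ range n, raiseCoeff n j • up j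

noncomputable def lower (n : ℕ) : Module.End ℚ V := ∑ j ∈ range n, down j

lemma down_mul_up_sub_up_mul_down_single (j : ℕ) (S : Finset ℕ) :
    (down j * up j - up j * down j) (Finsupp.single S 1) =
      (if j = 0 then 1 - 2 * (if 1 ∈ S then 1 else 0)
        else (if j ∈ S then 1 else 0) - (if j + 1 ∈ S then 1 else 0) : ℚ) •
        Finsupp.single S 1 := by
  rw [down_mul_up_sub_up_mul_down]
  by_cases hj : j = 0 <;> simp only [hj, ↓reduceIte, LinearMap.sub_apply, LinearMap.smul_apply,
    Module.End.one_apply, numberOp_single, sub_smul, one_smul, mul_smul]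

lemma lower_mul_raise_sub_single {n : ℕ} {S : Finset ℕ} (hS : S ⊆ Icc 1 n) :
    (lower n * raise n - raise n * lower n) (Finsupp.single S 1) =
      ((∑ i ∈ Icc 1 n, i : ℕ) - 2 * (∑ i ∈ S, i : ℕ) : ℚ) • Finsupp.single S 1 := by
  rw [lower, raise, sum_mul_sum_sub_sum_mul_sum _ _ _
    fun k _ j _ hkj => (commute_down_up hkj).smul_right _]
  simp only [mul_smul_comm, smul_mul_assoc]
  rw [sum_congr rfl fun j _ => (smul_sub (raiseCoeff n j) (down j * up j) (up j * down j)).symm]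
  have hsum : ((∑ i ∈ S, i : ℕ) : ℚ) = ∑ a ∈ Icc 1 n, (a : ℚ) * if a ∈ S then 1 else 0 := by
    simp [Finset.sum_ite_mem, Finset.inter_eq_right.mpr hS]
  rw [hsum, ← sum_raiseCoeff_mul, sum_smul, LinearMap.sum_apply]
  refine sum_congr rfl fun j _ => ?_
  rw [LinearMap.smul_apply, down_mul_up_sub_up_mul_down_single, smul_smul]

/-- Graded by `ℤ` so that `eraseOp a` lowers the grade by `a` with no truncation. -/
def gradedPiece (s : Finset ℕ) (k : ℤ) : Submodule ℚ V :=
  Finsupp.supported ℚ ℚ {t | t ⊆ s ∧ (∑ i ∈ t, i : ℕ) = k}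

lemma single_mem_gradedPiece {s t : Finset ℕ} {k : ℤ} :
    Finsupp.single t 1 ∈ gradedPiece s k ↔ t ⊆ s ∧ (∑ i ∈ t, i : ℕ) = k := by
  simp [gradedPiece, Finsupp.mem_supported]

lemma mem_gradedPiece_of_single {f : Module.End ℚ V} {s s' : Finset ℕ} {k k' : ℤ}
    (h : ∀ t ⊆ s, (∑ i ∈ t, i : ℕ) = k → f (Finsupp.single t 1) ∈ gradedPiece s' k')
    {x : V} (hx : x ∈ gradedPiece s k) : f x ∈ gradedPiece s' k' := by
  have : gradedPiece s k ≤ (gradedPiece s' k').comap f := by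
    rw [gradedPiece, Finsupp.supported_eq_span_single, Submodule.span_le]
    rintro _ ⟨t, ht, rfl⟩
    exact h t ht.1 ht.2
  exact this hx

lemma insertOp_mem_gradedPiece {s : Finset ℕ} {a : ℕ} (ha : a ∈ s) {k : ℤ} {x : V}
    (hx : x ∈ gradedPiece s k) : insertOp a x ∈ gradedPiece s (k + a) := by
  refine mem_gradedPiece_of_single (fun t hts htk => ?_) hx
  rw [insertOp_single]
  split_ifs with hat
  · exact zero_mem _
  · rw [single_mem_gradedPiece, sum_insert hat]
    exact ⟨insert_subset ha hts, by push_cast at htk ⊢; linarith⟩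

lemma eraseOp_mem_gradedPiece {s : Finset ℕ} (a : ℕ) {k : ℤ} {x : V}
    (hx : x ∈ gradedPiece s k) : eraseOp a x ∈ gradedPiece s (k - a) := by
  refine mem_gradedPiece_of_single (fun t hts htk => ?_) hx
  rw [eraseOp_single]
  split_ifs with hat
  · rw [single_mem_gradedPiece, ← htk, ← sum_erase_add t _ hat]
    exact ⟨(erase_subset a t).trans hts, by push_cast; ring⟩
  · exact zero_mem _

lemma gradedPiece_eq_bot {s : Finset ℕ} {k : ℤ} (hk : k < 0) : gradedPiece s k = ⊥ := by
  rw [gradedPiece, ← Finsupp.supported_empty]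
  congr
  exact Set.eq_empty_of_forall_notMem fun t ht => by have := ht.2; omega

lemma finrank_gradedPiece (s : Finset ℕ) (k : ℕ) :
    Module.finrank ℚ (gradedPiece s k) = #(subsetsWithSum s k) := by
  have : {t | t ⊆ s ∧ (∑ i ∈ t, i : ℕ) = (k : ℤ)} = ↑(subsetsWithSum s k) := by
    ext t; simp only [Set.mem_ofPred_eq, mem_coe, mem_subsetsWithSum, Nat.cast_inj]
  rw [gradedPiece, (Finsupp.supportedEquivFinsupp _).finrank_eq, this, Module.finrank_finsupp_self]
  simp

instance (s : Finset ℕ) (k : ℤ) : FiniteDimensional ℚ (gradedPiece s k) := by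
  have : Finite {t | t ⊆ s ∧ (∑ i ∈ t, i : ℕ) = k} :=
    (s.powerset.finite_toSet.subset fun t ht => mem_powerset.mpr ht.1).to_subtype
  exact (Finsupp.supportedEquivFinsupp _).symm.finiteDimensional

lemma up_mem_gradedPiece {n j : ℕ} (hj : j < n) {k : ℤ} {x : V}
    (hx : x ∈ gradedPiece (Icc 1 n) k) : up j x ∈ gradedPiece (Icc 1 n) (k + 1) := by
  have hmem : j + 1 ∈ Icc 1 n := mem_Icc.mpr ⟨by omega, by omega⟩
  rw [up, Module.End.mul_apply]
  split_ifs with hj₀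
  · simpa [hj₀] using insertOp_mem_gradedPiece hmem hx
  · convert insertOp_mem_gradedPiece hmem (eraseOp_mem_gradedPiece j hx) using 2
    push_cast; ring

lemma down_mem_gradedPiece {n j : ℕ} (hj : j < n) {k : ℤ} {x : V}
    (hx : x ∈ gradedPiece (Icc 1 n) (k + 1)) : down j x ∈ gradedPiece (Icc 1 n) k := by
  rw [down, Module.End.mul_apply]
  split_ifs with hj₀
  · simpa [hj₀] using eraseOp_mem_gradedPiece (j + 1) hx
  · have hmem : j ∈ Icc 1 n := mem_Icc.mpr ⟨by omega, by omega⟩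
    simpa using insertOp_mem_gradedPiece hmem (eraseOp_mem_gradedPiece (j + 1) hx)

lemma down_eq_zero_of_mem_gradedPiece_zero {s : Finset ℕ} (j : ℕ) {x : V}
    (hx : x ∈ gradedPiece s 0) : down j x = 0 := by
  have h := eraseOp_mem_gradedPiece (j + 1) hx
  rw [gradedPiece_eq_bot (by omega), Submodule.mem_bot] at h
  rw [down, Module.End.mul_apply, h, map_zero]

lemma lower_mul_raise_sub_apply {n : ℕ} {k : ℤ} {x : V} (hx : x ∈ gradedPiece (Icc 1 n) k) :
    lower n (raise n x) - raise n (lower n x) = ((∑ i ∈ Icc 1 n, i : ℕ) - 2 * k : ℚ) • x := by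
  suffices gradedPiece (Icc 1 n) k ≤
      (lower n * raise n - raise n * lower n).eigenspace ((∑ i ∈ Icc 1 n, i : ℕ) - 2 * k : ℚ) from
    Module.End.mem_eigenspace_iff.mp (this hx)
  rw [gradedPiece, Finsupp.supported_eq_span_single, Submodule.span_le]
  rintro _ ⟨t, ⟨hts, htk⟩, rfl⟩
  rw [SetLike.mem_coe, Module.End.mem_eigenspace_iff, lower_mul_raise_sub_single hts, ← htk]
  push_cast
  rfl

lemma card_subsetsWithSum_le_succ {n k : ℕ} (hk : 2 * k < ∑ i ∈ Icc 1 n, i) :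
    #(subsetsWithSum (Icc 1 n) k) ≤ #(subsetsWithSum (Icc 1 n) (k + 1)) := by
  rw [← finrank_gradedPiece, ← finrank_gradedPiece]
  push_cast
  refine finrank_le_finrank_succ (W := fun d : ℕ => gradedPiece (Icc 1 n) d)
    (E := raise n) (F := lower n) (h := fun d => (∑ i ∈ Icc 1 n, i : ℕ) - 2 * d)
    (fun x hx => ?_) (fun d x hx => ?_) (fun x hx => ?_) (fun d x hx => ?_) (fun j hj => ?_)
  · simp only [raise, LinearMap.sum_apply, LinearMap.smul_apply]
    push_cast
    exact sum_mem fun j hj => Submodule.smul_mem _ _ (up_mem_gradedPiece (mem_range.mp hj) hx)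
  · simp only [lower, LinearMap.sum_apply]
    push_cast at hx
    exact sum_mem fun j hj => down_mem_gradedPiece (mem_range.mp hj) hx
  · simp only [lower, LinearMap.sum_apply]
    exact sum_eq_zero fun j _ => down_eq_zero_of_mem_gradedPiece_zero j hx
  · simpa using lower_mul_raise_sub_apply hx
  · have : (2 * j : ℕ) < ∑ i ∈ Icc 1 n, i := by omega
    simp only [sub_pos]
    exact_mod_cast this

end Proctor

/-- The polynomial `∏_{i=1}^n (1+q^i)` is symmetric and unimodal. -/
theorem stmt_18 (n : ℕ) :
    SymmPolyN (∏ i ∈ Finset.Icc 1 n, (1 + (Polynomial.X : Polynomial ℕ) ^ i)) ∧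
    UnimodalPolyN (∏ i ∈ Finset.Icc 1 n, (1 + (Polynomial.X : Polynomial ℕ) ^ i)) := by
  refine ⟨symmPolyN_prod_one_add_X_pow _, unimodalPolyN_of_symmPolyN
    (symmPolyN_prod_one_add_X_pow _) fun k hk => ?_⟩
  rw [natDegree_prod_one_add_X_pow] at hk
  rw [coeff_prod_one_add_X_pow, coeff_prod_one_add_X_pow]
  exact Proctor.card_subsetsWithSum_le_succ hk
end

section
/- The map ρ(λ, b) = |λ| + b − 1 is a rank function on the poset M^1(n) of pairs (λ, b) with λ a nonempty partition with distinct parts each at most n and 1 ≤ b ≤ ℓ(λ), ordered componentwise: (λ, b) ≤ (λ', b') iff λ_i ≤ λ'_i for all i (padding with zeros) and b ≤ b'. -/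
/-!
Componentwise comparison of strict partitions is the same as comparison of their
conjugates `λ'_k = #{i | k ≤ λ_i}`, and `|λ| = ∑_k λ'_k`; hence `ρ` is monotone.
If `(λ, b) < (μ, c)`, then either `λ = μ` and `b` can be raised by one, or `λ'_k < μ'_k`
for some `k`. For the least such `k` with `k ∉ λ`, either `k - 1 ∈ λ` or `k = 1`, and
replacing the part `k - 1` by `k` (or adding a part `1`) raises `λ'` only at `k`, staying
below `μ`. So above the bottom of every nontrivial interval there is an element of rank one
more, which forces covers to raise the rank by exactly one.
-/

/-- The `i`-th part (0-indexed) of a partition with distinct parts encoded as a finset,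
with parts listed in decreasing order and padded with zeros. -/
def partOf (S : Finset ℕ) (i : ℕ) : ℕ := ((S.sort (· ≤ ·)).reverse).getD i 0

/-- The carrier of the poset `M¹(n)`: pairs `(λ, b)` with `λ` a nonempty partition with
distinct parts each at most `n`, and `1 ≤ b ≤ ℓ(λ)`. -/
def M1 (n : ℕ) :=
  {x : Finset ℕ × ℕ // x.1.Nonempty ∧ (∀ a ∈ x.1, 1 ≤ a ∧ a ≤ n) ∧
    1 ≤ x.2 ∧ x.2 ≤ x.1.card}

/-- The componentwise order on `M¹(n)`: `(λ, b) ≤ (λ', b')` iff `λ_i ≤ λ'_i` for all `i`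
(padding with zeros) and `b ≤ b'`. -/
def M1le {n : ℕ} (p q : M1 n) : Prop :=
  (∀ i, partOf p.1.1 i ≤ partOf q.1.1 i) ∧ p.1.2 ≤ q.1.2

open Finset

-- `conjPartOf S k` is the part `λ'_k` of the conjugate partition, for `k ≥ 1`.
def conjPartOf (S : Finset ℕ) (k : ℕ) : ℕ := #{s ∈ S | k ≤ s}

lemma partOf_eq_getD_sort_ge (S : Finset ℕ) (i : ℕ) :
    partOf S i = (S.sort (· ≥ ·)).getD i 0 := by
  rw [partOf, List.SortedGT.eq_reverse_of_mem_iff_of_sortedLT (by simp) S.sortedGT_sort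
    S.sortedLT_sort]

lemma partOf_empty (i : ℕ) : partOf ∅ i = 0 := by
  simp [partOf_eq_getD_sort_ge]

lemma partOf_insert_of_forall_lt {S : Finset ℕ} {a : ℕ} (ha : ∀ s ∈ S, s < a) (i : ℕ) :
    partOf (insert a S) i = if i = 0 then a else partOf S (i - 1) := by
  have hsort : (insert a S).sort (· ≥ ·) = a :: S.sort (· ≥ ·) :=
    sort_insert _ (fun s hs => (ha s hs).le) (fun h => (ha a h).false)
  rcases i with _ | i <;> simp [partOf_eq_getD_sort_ge, hsort]

lemma conjPartOf_insert_of_forall_lt {S : Finset ℕ} {a : ℕ} (ha : ∀ s ∈ S, s < a) (k : ℕ) :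
    conjPartOf (insert a S) k = conjPartOf S k + if k ≤ a then 1 else 0 := by
  unfold conjPartOf
  rw [filter_insert]
  split_ifs with h
  · rw [card_insert_of_notMem fun h => (ha a (mem_filter.1 h).1).false]
  · rfl

lemma le_partOf_iff {S : Finset ℕ} {k : ℕ} (hk : 1 ≤ k) (i : ℕ) :
    k ≤ partOf S i ↔ i < conjPartOf S k := by
  induction S using Finset.induction_on_max generalizing i with
  | empty => simp only [partOf_empty, conjPartOf, filter_empty, card_empty]; omega
  | insert a S ha ih =>
    rw [partOf_insert_of_forall_lt ha, conjPartOf_insert_of_forall_lt ha]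
    by_cases hka : k ≤ a
    · rcases i with _ | i <;> simp [hka, ih]
    · have hzero : conjPartOf S k = 0 := by
        rw [conjPartOf, card_eq_zero, filter_eq_empty_iff]
        intro s hs; have := ha s hs; omega
      rcases i with _ | i <;> simp [hka, hzero, ih]

lemma partOf_le_partOf_iff {S T : Finset ℕ} :
    (∀ i, partOf S i ≤ partOf T i) ↔ ∀ k, 1 ≤ k → conjPartOf S k ≤ conjPartOf T k := by
  constructor
  · intro h k hk
    by_contra! hlt
    have := (le_partOf_iff hk _).1 ((le_partOf_iff hk _).2 hlt |>.trans (h _))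
    omega
  · intro h i
    rcases Nat.eq_zero_or_pos (partOf S i) with h0 | hpos
    · simp [h0]
    · exact (le_partOf_iff hpos i).2 <| ((le_partOf_iff hpos i).1 le_rfl).trans_le (h _ hpos)

lemma conjPartOf_one {S : Finset ℕ} (hS : ∀ s ∈ S, 1 ≤ s) : conjPartOf S 1 = #S := by
  rw [conjPartOf, filter_true_of_mem hS]

lemma conjPartOf_le_card (S : Finset ℕ) (k : ℕ) : conjPartOf S k ≤ #S :=
  card_filter_le _ _

lemma conjPartOf_eq_succ_add (S : Finset ℕ) (k : ℕ) :
    conjPartOf S k = conjPartOf S (k + 1) + if k ∈ S then 1 else 0 := by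
  have : {s ∈ S | k ≤ s} = {s ∈ S | k + 1 ≤ s} ∪ {s ∈ S | s = k} := by
    ext s; simp only [mem_filter, mem_union]; grind
  rw [conjPartOf, conjPartOf, this, card_union_of_disjoint, filter_eq']
  · split_ifs <;> simp
  · exact disjoint_filter.2 fun s _ h h' => by omega

lemma conjPartOf_succ_le (S : Finset ℕ) (k : ℕ) : conjPartOf S (k + 1) ≤ conjPartOf S k := by
  rw [conjPartOf_eq_succ_add S k]; omega

lemma sum_id_eq_sum_conjPartOf {S : Finset ℕ} {n : ℕ} (hS : ∀ s ∈ S, s ≤ n) :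
    S.sum id = ∑ k ∈ Icc 1 n, conjPartOf S k := by
  have hs : ∀ s ∈ S, s = ∑ k ∈ Icc 1 n, if k ≤ s then 1 else 0 := fun s hs => by
    have hIcc : {k ∈ Icc 1 n | k ≤ s} = Icc 1 s := by
      ext k; simp only [mem_filter, mem_Icc]; have := hS s hs; omega
    rw [← card_filter, hIcc, Nat.card_Icc, Nat.add_sub_cancel]
  simp only [conjPartOf, card_filter]
  rw [sum_comm, ← sum_congr rfl hs]
  rfl

lemma conjPartOf_insert_succ_erase {S : Finset ℕ} {j : ℕ} (hj : j = 0 ∨ j ∈ S)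
    (hj1 : j + 1 ∉ S) {k : ℕ} (hk : 1 ≤ k) :
    conjPartOf (insert (j + 1) (S.erase j)) k =
      conjPartOf S k + if k = j + 1 then 1 else 0 := by
  unfold conjPartOf
  rw [filter_insert, filter_erase]
  have hnot : j + 1 ∉ ({s ∈ S | k ≤ s}.erase j) :=
    fun h => hj1 (mem_filter.1 (mem_of_mem_erase h)).1
  split_ifs with hkj1 hkj hkj
  · rw [card_insert_of_notMem hnot, erase_eq_of_notMem fun h => by
      have := (mem_filter.1 h).2; omega]
  · have hjS : j ∈ {s ∈ S | k ≤ s} := mem_filter.2 ⟨hj.resolve_left (by omega), by omega⟩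
    rw [card_insert_of_notMem hnot, card_erase_of_mem hjS]
    have := card_pos.2 ⟨j, hjS⟩
    omega
  · omega
  · rw [erase_eq_of_notMem fun h => by have := (mem_filter.1 h).2; omega]
    simp

lemma card_le_card_of_partOf_le {S T : Finset ℕ} (hS : ∀ s ∈ S, 1 ≤ s)
    (h : ∀ i, partOf S i ≤ partOf T i) : #S ≤ #T := by
  rw [← conjPartOf_one hS]
  exact (partOf_le_partOf_iff.1 h 1 le_rfl).trans (conjPartOf_le_card T 1)

lemma sum_id_le_sum_id_of_partOf_le {S T : Finset ℕ} {n : ℕ} (hS : ∀ s ∈ S, s ≤ n)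
    (hT : ∀ t ∈ T, t ≤ n) (h : ∀ i, partOf S i ≤ partOf T i) : S.sum id ≤ T.sum id := by
  rw [sum_id_eq_sum_conjPartOf hS, sum_id_eq_sum_conjPartOf hT]
  exact sum_le_sum fun k hk => partOf_le_partOf_iff.1 h k (mem_Icc.1 hk).1

lemma exists_notMem_conjPartOf_lt {S T : Finset ℕ} (hS : ∀ s ∈ S, 1 ≤ s)
    (hT : ∀ t ∈ T, 1 ≤ t)
    (h : ∀ k, 1 ≤ k → conjPartOf S k ≤ conjPartOf T k) (hne : S ≠ T) :
    ∃ m, 1 ≤ m ∧ m ∉ S ∧ conjPartOf S m < conjPartOf T m := by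
  by_cases hTS : T ⊆ S
  · refine absurd (eq_of_subset_of_card_le hTS ?_).symm hne
    rw [← conjPartOf_one hS]
    exact (h 1 le_rfl).trans (conjPartOf_le_card T 1)
  obtain ⟨m, hmT, hmS⟩ := not_subset.1 hTS
  refine ⟨m, hT m hmT, hmS, ?_⟩
  have := h (m + 1) (by omega)
  rw [conjPartOf_eq_succ_add S m, conjPartOf_eq_succ_add T m, if_neg hmS, if_pos hmT]
  omega

lemma exists_succ_notMem_conjPartOf_lt {S T : Finset ℕ} (hS : ∀ s ∈ S, 1 ≤ s)
    (hT : ∀ t ∈ T, 1 ≤ t) (h : ∀ k, 1 ≤ k → conjPartOf S k ≤ conjPartOf T k) (hne : S ≠ T) :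
    ∃ j, (j = 0 ∨ j ∈ S) ∧ j + 1 ∉ S ∧ conjPartOf S (j + 1) < conjPartOf T (j + 1) := by
  have hex : ∃ j, j + 1 ∉ S ∧ conjPartOf S (j + 1) < conjPartOf T (j + 1) := by
    obtain ⟨m, hm1, hmS, hlt⟩ := exists_notMem_conjPartOf_lt hS hT h hne
    exact ⟨m - 1, by rwa [Nat.sub_add_cancel hm1], by rwa [Nat.sub_add_cancel hm1]⟩
  obtain ⟨hjS, hlt⟩ := Nat.find_spec hex
  refine ⟨Nat.find hex, ?_, hjS, hlt⟩
  by_contra! hj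
  refine Nat.find_min hex (show Nat.find hex - 1 < Nat.find hex by omega) ⟨?_, ?_⟩
  · rw [Nat.sub_add_cancel (by omega)]; exact hj.2
  · rw [Nat.sub_add_cancel (by omega), conjPartOf_eq_succ_add S, if_neg hj.2]
    have := conjPartOf_succ_le T (Nat.find hex)
    omega

lemma exists_partOf_between_sum_id_succ {S T : Finset ℕ} {n : ℕ}
    (hS : ∀ s ∈ S, 1 ≤ s ∧ s ≤ n) (hT : ∀ t ∈ T, 1 ≤ t ∧ t ≤ n)
    (h : ∀ i, partOf S i ≤ partOf T i) (hne : S ≠ T) :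
    ∃ ν : Finset ℕ, (∀ a ∈ ν, 1 ≤ a ∧ a ≤ n) ∧ (∀ i, partOf S i ≤ partOf ν i) ∧
      (∀ i, partOf ν i ≤ partOf T i) ∧ ν.sum id = S.sum id + 1 := by
  rw [partOf_le_partOf_iff] at h
  obtain ⟨j, hj, hj1, hlt⟩ :=
    exists_succ_notMem_conjPartOf_lt (fun s hs => (hS s hs).1) (fun t ht => (hT t ht).1) h hne
  have hjn : j + 1 ≤ n := by
    obtain ⟨t, ht⟩ := card_pos.1 (Nat.zero_lt_of_lt hlt)
    exact (mem_filter.1 ht).2.trans (hT t (mem_filter.1 ht).1).2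
  have hν := fun k (hk : 1 ≤ k) => conjPartOf_insert_succ_erase hj hj1 hk
  have hνn : ∀ a ∈ insert (j + 1) (S.erase j), 1 ≤ a ∧ a ≤ n := by
    intro a ha
    rcases mem_insert.1 ha with rfl | ha
    · omega
    · exact hS a (mem_of_mem_erase ha)
  refine ⟨insert (j + 1) (S.erase j), hνn, ?_, ?_, ?_⟩
  · exact partOf_le_partOf_iff.2 fun k hk => by rw [hν k hk]; omega
  · refine partOf_le_partOf_iff.2 fun k hk => ?_
    rw [hν k hk]
    split_ifs with hkj
    · subst hkj; omega
    · rw [add_zero]; exact h k hk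
  · rw [sum_id_eq_sum_conjPartOf fun a ha => (hνn a ha).2,
      sum_id_eq_sum_conjPartOf fun s hs => (hS s hs).2,
      sum_congr rfl fun k hk => hν k (mem_Icc.1 hk).1, sum_add_distrib, sum_ite_eq']
    simp [hjn]

namespace M1

variable {n : ℕ}

def rank (p : M1 n) : ℕ := p.1.1.sum id + p.1.2 - 1

lemma rank_mono {p q : M1 n} (h : M1le p q) : p.rank ≤ q.rank := by
  have := sum_id_le_sum_id_of_partOf_le (fun a ha => (p.2.2.1 a ha).2)
    (fun a ha => (q.2.2.1 a ha).2) h.1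
  have := h.2
  unfold rank; omega

lemma exists_le_rank_eq_succ {p q : M1 n} (h : M1le q p) (hne : q ≠ p) :
    ∃ r : M1 n, M1le q r ∧ M1le r p ∧ r.rank = q.rank + 1 := by
  obtain ⟨hqne, hq, hq1, hqb⟩ := q.2
  obtain ⟨-, hp, -, hpb⟩ := p.2
  by_cases hpart : q.1.1 = p.1.1
  · have hb : q.1.2 < p.1.2 :=
      lt_of_le_of_ne h.2 fun hb => hne (Subtype.ext (Prod.ext hpart hb))
    refine ⟨⟨(q.1.1, q.1.2 + 1), hqne, hq, by omega, by dsimp only; rw [hpart]; omega⟩,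
      ⟨fun _ => le_rfl, by dsimp only; omega⟩, ⟨h.1, hb⟩, ?_⟩
    dsimp only [rank]
    omega
  · obtain ⟨ν, hν, hqν, hνp, hsum⟩ := exists_partOf_between_sum_id_succ hq hp h.1 hpart
    have hcard := card_le_card_of_partOf_le (fun s hs => (hq s hs).1) hqν
    refine ⟨⟨(ν, q.1.2), card_pos.1 (show 0 < #ν by omega), hν, hq1,
      by dsimp only; omega⟩,
      ⟨hqν, le_rfl⟩, ⟨hνp, h.2⟩, ?_⟩
    dsimp only [rank]
    omega

lemma rank_eq_succ_of_covBy {p q : M1 n} (h : M1le q p) (hne : q ≠ p)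
    (hcov : ¬∃ r : M1 n, (M1le q r ∧ q ≠ r) ∧ (M1le r p ∧ r ≠ p)) :
    p.rank = q.rank + 1 := by
  obtain ⟨r, hqr, hrp, hrank⟩ := exists_le_rank_eq_succ h hne
  have hrq : q ≠ r := fun hqr => by subst hqr; omega
  obtain rfl : r = p := by_contra fun hrp' => hcov ⟨r, ⟨hqr, hrq⟩, hrp, hrp'⟩
  exact hrank

end M1

/-- `ρ(λ, b) = |λ| + b - 1` is a rank function on `M¹(n)`: it is order preserving and
increases by exactly one along covering relations. -/
theorem stmt_19 (n : ℕ) :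
    (∀ p q : M1 n, M1le p q → p.1.1.sum id + p.1.2 - 1 ≤ q.1.1.sum id + q.1.2 - 1) ∧
    (∀ p q : M1 n,
      (M1le q p ∧ q ≠ p ∧ ¬∃ r : M1 n, (M1le q r ∧ q ≠ r) ∧ (M1le r p ∧ r ≠ p)) →
        p.1.1.sum id + p.1.2 - 1 = (q.1.1.sum id + q.1.2 - 1) + 1) :=
  ⟨fun _ _ h => M1.rank_mono h,
    fun _ _ ⟨h, hne, hcov⟩ => M1.rank_eq_succ_of_covBy h hne hcov⟩
end
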